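/- arXiv:1508.02243 — 6 statements merged into one kernel-verified Lean document; each statement's English description precedes it below -/
import Mathlib

section
/- For every Kepler solution r : I → ℝ³, the eccentricity vector e(t) = (ṙ(t) × h(t))/μ − r(t)/|r(t)| is constant: for all t₁, t₂ ∈ I, e(t₁) = e(t₂). -/
open scoped InnerProductSpace

/-- Cross product in ℝ³ (modelled as `EuclideanSpace ℝ (Fin 3)`). -/
noncomputable def cross3 (a b : EuclideanSpace ℝ (Fin 3)) : EuclideanSpace ℝ (Fin 3) :=
  (WithLp.equiv 2 (Fin 3 → ℝ)).symm
    ![a 1 * b 2 - a 2 * b 1, a 2 * b 0 - a 0 * b 2, a 0 * b 1 - a 1 * b 0]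

/-- The vector (x, y, z) ∈ ℝ³. -/
noncomputable def v3 (x y z : ℝ) : EuclideanSpace ℝ (Fin 3) :=
  (WithLp.equiv 2 (Fin 3 → ℝ)).symm ![x, y, z]

/-!
Since the Kepler force is central, the angular momentum `h = r × ṙ` is conserved. Hence
`(ṙ × h)' = r̈ × h = -(μ / |r|³) r × (r × ṙ) = (μ / |r|³) (|r|² ṙ - ⟨r, ṙ⟩ r)`
by the triple product expansion, and this is exactly `μ` times the derivative of the unit vector
`r / |r|`. So `e` has zero derivative on the interval `I`, and is constant by the mean value
theorem.
-/

open scoped Matrix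

local notation "ℝ³" => EuclideanSpace ℝ (Fin 3)

theorem cross3_eq_toLp_cross (a b : ℝ³) : cross3 a b = WithLp.toLp 2 (a.ofLp ⨯₃ b.ofLp) := by
  simp [cross3, cross_apply]

noncomputable def cross3L : ℝ³ →L[ℝ] ℝ³ →L[ℝ] ℝ³ :=
  ((crossProduct.compl₁₂ (WithLp.linearEquiv 2 ℝ (Fin 3 → ℝ)).toLinearMap
      (WithLp.linearEquiv 2 ℝ (Fin 3 → ℝ)).toLinearMap).compr₂
    (WithLp.linearEquiv 2 ℝ (Fin 3 → ℝ)).symm.toLinearMap).toContinuousBilinearMap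

theorem cross3L_apply (a b : ℝ³) : cross3L a b = cross3 a b := by
  simp [cross3L, cross3_eq_toLp_cross]

theorem cross3_self (a : ℝ³) : cross3 a a = 0 := by
  simp [cross3_eq_toLp_cross]

theorem cross3_smul_left (c : ℝ) (a b : ℝ³) : cross3 (c • a) b = c • cross3 a b := by
  simp [cross3_eq_toLp_cross]

theorem cross3_smul_right (c : ℝ) (a b : ℝ³) : cross3 a (c • b) = c • cross3 a b := by
  simp [cross3_eq_toLp_cross]

theorem cross3_zero_right (a : ℝ³) : cross3 a 0 = 0 := by
  simp [cross3_eq_toLp_cross]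

theorem cross3_cross3 (a b c : ℝ³) : cross3 a (cross3 b c) = ⟪a, c⟫_ℝ • b - ⟪a, b⟫_ℝ • c := by
  simp [cross3_eq_toLp_cross, cross_cross_eq_smul_sub_smul',
    EuclideanSpace.inner_eq_star_dotProduct, dotProduct_comm]

theorem HasDerivAt.cross3 {f g : ℝ → ℝ³} {f' g' : ℝ³} {t : ℝ} (hf : HasDerivAt f f' t)
    (hg : HasDerivAt g g' t) :
    HasDerivAt (fun s ↦ _root_.cross3 (f s) (g s))
      (_root_.cross3 f' (g t) + _root_.cross3 (f t) g') t := by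
  simpa only [cross3L_apply, add_comm] using
    cross3L.hasDerivAt_of_bilinear (fun _ ↦ hf) (fun _ ↦ hg)

section InnerProductSpace

variable {F : Type*} [NormedAddCommGroup F] [InnerProductSpace ℝ F] {f : ℝ → F} {f' : F} {t : ℝ}

theorem HasDerivAt.norm (hf : HasDerivAt f f' t) (h0 : f t ≠ 0) :
    HasDerivAt (‖f ·‖) (⟪f t, f'⟫_ℝ / ‖f t‖) t := by
  have h := hf.norm_sq.sqrt (by positivity)
  simp only [Real.sqrt_sq (norm_nonneg _)] at h
  convert h using 1
  field_simp

theorem HasDerivAt.inv_norm_smul (hf : HasDerivAt f f' t) (h0 : f t ≠ 0) :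
    HasDerivAt (fun s ↦ ‖f s‖⁻¹ • f s)
      ((‖f t‖ ^ 3)⁻¹ • (‖f t‖ ^ 2 • f' - ⟪f t, f'⟫_ℝ • f t)) t := by
  have hn : ‖f t‖ ≠ 0 := norm_ne_zero_iff.2 h0
  have hinv : HasDerivAt (fun s ↦ ‖f s‖⁻¹) (-(⟪f t, f'⟫_ℝ / ‖f t‖) / ‖f t‖ ^ 2) t :=
    (hf.norm h0).inv hn
  refine (hinv.smul hf).congr_deriv ?_
  match_scalars <;> field_simp

end InnerProductSpace

theorem Set.OrdConnected.eq_of_hasDerivAt_zero {E : Type*} [NormedAddCommGroup E]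
    [NormedSpace ℝ E] {f : ℝ → E} {s : Set ℝ} (hs : s.OrdConnected)
    (hf : ∀ x ∈ s, HasDerivAt f 0 x) {x y : ℝ} (hx : x ∈ s) (hy : y ∈ s) : f x = f y := by
  have h := hs.convex.norm_image_sub_le_of_norm_hasDerivWithin_le
    (fun z hz ↦ (hf z hz).hasDerivWithinAt) (fun _ _ ↦ norm_zero.le) hx hy
  rw [zero_mul, norm_le_zero_iff, sub_eq_zero] at h
  exact h.symm

noncomputable def eccentricityVector (μ : ℝ) (x v : ℝ³) : ℝ³ :=
  μ⁻¹ • cross3 v (cross3 x v) - ‖x‖⁻¹ • x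

section Kepler

variable {μ c : ℝ} {r v : ℝ → ℝ³} {t : ℝ}

theorem hasDerivAt_angularMomentum_of_central (hr : HasDerivAt r (v t) t)
    (hv : HasDerivAt v (c • r t) t) :
    HasDerivAt (fun s ↦ cross3 (r s) (v s)) 0 t := by
  simpa [cross3_self, cross3_smul_right] using hr.cross3 hv

theorem hasDerivAt_velocity_cross_angularMomentum (hμ : μ ≠ 0) (hr : HasDerivAt r (v t) t)
    (hv : HasDerivAt v (-(μ / ‖r t‖ ^ 3) • r t) t) :
    HasDerivAt (fun s ↦ μ⁻¹ • cross3 (v s) (cross3 (r s) (v s)))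
      ((‖r t‖ ^ 3)⁻¹ • (‖r t‖ ^ 2 • v t - ⟪r t, v t⟫_ℝ • r t)) t := by
  refine ((hv.cross3 (hasDerivAt_angularMomentum_of_central hr hv)).const_smul μ⁻¹).congr_deriv ?_
  rw [cross3_zero_right, add_zero, cross3_smul_left, cross3_cross3, real_inner_self_eq_norm_sq]
  match_scalars <;> field_simp

theorem hasDerivAt_eccentricityVector (hμ : μ ≠ 0) (hr : HasDerivAt r (v t) t)
    (hv : HasDerivAt v (-(μ / ‖r t‖ ^ 3) • r t) t) (h0 : r t ≠ 0) :
    HasDerivAt (fun s ↦ eccentricityVector μ (r s) (v s)) 0 t :=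
  ((hasDerivAt_velocity_cross_angularMomentum hμ hr hv).sub (hr.inv_norm_smul h0)).congr_deriv
    (sub_self _)

end Kepler

theorem eccentricity_vector_constant_general
(μ : ℝ) (hμ : 0 < μ) (I : Set ℝ) (hIconn : I.OrdConnected)
    (r : ℝ → EuclideanSpace ℝ (Fin 3))
    (hdiff : ∀ t ∈ I, DifferentiableAt ℝ r t)
    (hdiff' : ∀ t ∈ I, DifferentiableAt ℝ (deriv r) t)
    (hne : ∀ t ∈ I, r t ≠ 0)
    (hode : ∀ t ∈ I, deriv (deriv r) t = -(μ / ‖r t‖ ^ 3) • r t)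
    (t₁ t₂ : ℝ) (ht₁ : t₁ ∈ I) (ht₂ : t₂ ∈ I) :
    μ⁻¹ • cross3 (deriv r t₁) (cross3 (r t₁) (deriv r t₁)) - ‖r t₁‖⁻¹ • r t₁ =
      μ⁻¹ • cross3 (deriv r t₂) (cross3 (r t₂) (deriv r t₂)) - ‖r t₂‖⁻¹ • r t₂ := by
  refine hIconn.eq_of_hasDerivAt_zero (f := fun t ↦ eccentricityVector μ (r t) (deriv r t))
    (fun t ht ↦ ?_) ht₁ ht₂
  have hacc : HasDerivAt (deriv r) (-(μ / ‖r t‖ ^ 3) • r t) t :=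
    hode t ht ▸ (hdiff' t ht).hasDerivAt
  exact hasDerivAt_eccentricityVector hμ.ne' (hdiff t ht).hasDerivAt hacc (hne t ht)

/-- For every Kepler solution, the eccentricity vector
e(t) = (ṙ(t) × h(t))/μ − r(t)/|r(t)| is constant. -/
theorem eccentricity_vector_constant
(μ : ℝ) (hμ : 0 < μ) (I : Set ℝ) (hIopen : IsOpen I) (hIconn : I.OrdConnected)
    (r : ℝ → EuclideanSpace ℝ (Fin 3))
    (hdiff : ∀ t ∈ I, DifferentiableAt ℝ r t)
    (hdiff' : ∀ t ∈ I, DifferentiableAt ℝ (deriv r) t)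
    (hne : ∀ t ∈ I, r t ≠ 0)
    (hode : ∀ t ∈ I, deriv (deriv r) t = -(μ / ‖r t‖ ^ 3) • r t)
    (t₁ t₂ : ℝ) (ht₁ : t₁ ∈ I) (ht₂ : t₂ ∈ I) :
    μ⁻¹ • cross3 (deriv r t₁) (cross3 (r t₁) (deriv r t₁)) - ‖r t₁‖⁻¹ • r t₁ =
      μ⁻¹ • cross3 (deriv r t₂) (cross3 (r t₂) (deriv r t₂)) - ‖r t₂‖⁻¹ • r t₂ :=
  eccentricity_vector_constant_general μ hμ I hIconn r hdiff hdiff' hne hode t₁ t₂ ht₁ ht₂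
end

section
/- Optimality of the Hohmann transfer (attainment): let l0z, l2z be nonzero real numbers with l0z + l2z ≠ 0, let σ be the sign of l0z + l2z, and set L = σ·√((l0z² + l2z²)/2), l₁ = (0, 0, L), s₁ = (0, ((l0z² − l2z²)/(l0z² + l2z²))·L, 0), u = (−1, 0, 0), e₁ = (1,0,0). Then l₁ ≠ 0, l₁ · s₁ = 0, |s₁| < |l₁|, l₁ · e₁ = 0, l₁ · u = 0, l2z·u₃ = 0, |u| = 1, l0z² = |l₁|² + (s₁ × l₁) · e₁, l2z² = |l₁|² + (s₁ × l₁) · u, and the total impulse magnitude equals |s₁ + l₁ × e₁ − (0, l0z, 0)| + |(0,0,l2z) × u − s₁ − l₁ × u| = |σ·√2·l0z²/√(l0z² + l2z²) − l0z| + |σ·√2·l2z²/√(l0z² + l2z²) − l2z|. -/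
open scoped InnerProductSpace

/-! Write `Q = l0z² + l2z²` and `c = (l0z² - l2z²)/Q`, so `s₁ = c • (l₁ × e₁)` and `|c| < 1`.
Both burns happen at apses, where every velocity involved points along the `y`-axis, so each
impulse is a scalar: `(1 + c) L - l0z` at `e₁` and `(1 - c) L - l2z` at `u = -e₁`. Since
`1 + c = 2 l0z² / Q`, `1 - c = 2 l2z² / Q` and `(2 / Q) √(Q / 2) = √2 / √Q`, these are the stated
costs. -/

section Coordinates

variable (a b c d e f : ℝ)

@[simp] lemma v3_apply_zero : v3 a b c 0 = a := rfl

@[simp] lemma v3_apply_one : v3 a b c 1 = b := rfl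

@[simp] lemma v3_apply_two : v3 a b c 2 = c := rfl

lemma v3_add_v3 : v3 a b c + v3 d e f = v3 (a + d) (b + e) (c + f) := by
  ext i; fin_cases i <;> rfl

lemma v3_sub_v3 : v3 a b c - v3 d e f = v3 (a - d) (b - e) (c - f) := by
  ext i; fin_cases i <;> rfl

lemma cross3_v3 :
    cross3 (v3 a b c) (v3 d e f) = v3 (b * f - c * e) (c * d - a * f) (a * e - b * d) := rfl

lemma inner_v3 : ⟪v3 a b c, v3 d e f⟫_ℝ = a * d + b * e + c * f := by
  simp only [PiLp.inner_apply, Fin.sum_univ_three, RCLike.inner_apply, conj_trivial,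
    v3_apply_zero, v3_apply_one, v3_apply_two]
  ring

lemma norm_v3 : ‖v3 a b c‖ = √(a ^ 2 + b ^ 2 + c ^ 2) := by
  simp [EuclideanSpace.norm_eq, Fin.sum_univ_three, sq_abs]

lemma norm_v3_sq : ‖v3 a b c‖ ^ 2 = a ^ 2 + b ^ 2 + c ^ 2 := by
  rw [norm_v3, Real.sq_sqrt (by positivity)]

lemma v3_eq_zero_iff : v3 a b c = 0 ↔ a = 0 ∧ b = 0 ∧ c = 0 := by
  refine ⟨fun h => ⟨?_, ?_, ?_⟩, fun ⟨ha, hb, hc⟩ => ?_⟩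
  · simpa using congrArg (· 0) h
  · simpa using congrArg (· 1) h
  · simpa using congrArg (· 2) h
  · ext i; fin_cases i <;> simp [ha, hb, hc]

end Coordinates

lemma norm_v3_zero_zero (t : ℝ) : ‖v3 0 t 0‖ = |t| := by
  simp [norm_v3, Real.sqrt_sq_eq_abs]

lemma abs_sub_div_add_lt_one {p q : ℝ} (hp : 0 < p) (hq : 0 < q) :
    |(p - q) / (p + q)| < 1 := by
  rw [abs_div, abs_of_pos (add_pos hp hq), div_lt_one (add_pos hp hq), abs_lt]
  constructor <;> linarith

lemma two_mul_div_mul_sqrt_half (x Q : ℝ) : 2 * x / Q * √(Q / 2) = √2 * x / √Q := by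
  rcases le_or_gt Q 0 with hQ | hQ
  · simp [Real.sqrt_eq_zero'.2 hQ,
      Real.sqrt_eq_zero'.2 (div_nonpos_of_nonpos_of_nonneg hQ zero_le_two)]
  · have h2 : √2 ^ 2 = 2 := Real.sq_sqrt zero_le_two
    have hQs : √Q ^ 2 = Q := Real.sq_sqrt hQ.le
    have : 0 < √Q := Real.sqrt_pos.2 hQ
    rw [Real.sqrt_div' Q zero_le_two]
    field_simp
    linear_combination (2 * x) * hQs - x * Q * h2

lemma one_add_sub_div_add_mul_sqrt_half (σ p q : ℝ) (hpq : p + q ≠ 0) :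
    (1 + (p - q) / (p + q)) * (σ * √((p + q) / 2)) = σ * √2 * p / √(p + q) := by
  rw [show 1 + (p - q) / (p + q) = 2 * p / (p + q) by field_simp; ring]
  linear_combination σ * two_mul_div_mul_sqrt_half p (p + q)

theorem hohmann_attained_general
    (l0z l2z : ℝ) (h0 : l0z ≠ 0) (h2 : l2z ≠ 0)
    (σ L : ℝ) (hσ : σ = if 0 < l0z + l2z then 1 else -1)
    (hL : L = σ * Real.sqrt ((l0z ^ 2 + l2z ^ 2) / 2))
    (l₁ s₁ u e₁ : EuclideanSpace ℝ (Fin 3))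
    (hl₁ : l₁ = v3 0 0 L)
    (hs₁ : s₁ = v3 0 ((l0z ^ 2 - l2z ^ 2) / (l0z ^ 2 + l2z ^ 2) * L) 0)
    (hu : u = v3 (-1) 0 0) (he₁ : e₁ = v3 1 0 0) :
    l₁ ≠ 0 ∧
    ⟪l₁, s₁⟫_ℝ = 0 ∧
    ‖s₁‖ < ‖l₁‖ ∧
    ⟪l₁, e₁⟫_ℝ = 0 ∧
    ⟪l₁, u⟫_ℝ = 0 ∧
    l2z * u 2 = 0 ∧
    ‖u‖ = 1 ∧
    l0z ^ 2 = ‖l₁‖ ^ 2 + ⟪cross3 s₁ l₁, e₁⟫_ℝ ∧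
    l2z ^ 2 = ‖l₁‖ ^ 2 + ⟪cross3 s₁ l₁, u⟫_ℝ ∧
    ‖s₁ + cross3 l₁ e₁ - v3 0 l0z 0‖ + ‖cross3 (v3 0 0 l2z) u - s₁ - cross3 l₁ u‖ =
      |σ * Real.sqrt 2 * l0z ^ 2 / Real.sqrt (l0z ^ 2 + l2z ^ 2) - l0z| +
        |σ * Real.sqrt 2 * l2z ^ 2 / Real.sqrt (l0z ^ 2 + l2z ^ 2) - l2z| := by
  subst hl₁ hs₁ hu he₁
  have hQ : 0 < l0z ^ 2 + l2z ^ 2 := by positivity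
  have hσ_sq : σ ^ 2 = 1 := by rw [hσ]; split_ifs <;> norm_num
  have hL_sq : L ^ 2 = (l0z ^ 2 + l2z ^ 2) / 2 := by
    rw [hL, mul_pow, hσ_sq, one_mul, Real.sq_sqrt (by positivity)]
  have hL0 : L ≠ 0 := by rintro rfl; linarith [hL_sq]
  have hc : |(l0z ^ 2 - l2z ^ 2) / (l0z ^ 2 + l2z ^ 2)| < 1 :=
    abs_sub_div_add_lt_one (by positivity) (by positivity)
  have hcL : (l0z ^ 2 - l2z ^ 2) / (l0z ^ 2 + l2z ^ 2) * L * L = (l0z ^ 2 - l2z ^ 2) / 2 := by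
    rw [mul_assoc, ← sq, hL_sq]; field_simp
  have hburn₀ := one_add_sub_div_add_mul_sqrt_half σ _ _ hQ.ne'
  have hburn₂ := one_add_sub_div_add_mul_sqrt_half σ (l2z ^ 2) (l0z ^ 2) (by positivity)
  rw [← hL] at hburn₀
  rw [add_comm (l2z ^ 2), ← hL] at hburn₂
  refine ⟨by simp [v3_eq_zero_iff, hL0], by simp [inner_v3], ?_, by simp [inner_v3],
    by simp [inner_v3], by simp, by simp [norm_v3], ?_, ?_, ?_⟩
  · simp only [norm_v3, zero_pow two_ne_zero, zero_add, add_zero, Real.sqrt_sq_eq_abs, abs_mul]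
    exact mul_lt_of_lt_one_left (abs_pos.2 hL0) hc
  · simp only [norm_v3_sq, cross3_v3, inner_v3]
    linear_combination -hL_sq - hcL
  · simp only [norm_v3_sq, cross3_v3, inner_v3]
    linear_combination -hL_sq + hcL
  · simp only [cross3_v3, v3_add_v3, v3_sub_v3, mul_zero, zero_mul, sub_zero, mul_one, add_zero]
    rw [norm_v3_zero_zero, norm_v3_zero_zero, ← hburn₀, ← hburn₂]
    congr 2 <;> ring

/-- Optimality of the Hohmann transfer (attainment): the classical Hohmann data satisfy
all the feasibility constraints and realize the critical cost whose sign agrees with the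
sign of l0z + l2z. -/
theorem hohmann_attained
    (l0z l2z : ℝ) (h0 : l0z ≠ 0) (h2 : l2z ≠ 0) (hsum : l0z + l2z ≠ 0)
    (σ L : ℝ) (hσ : σ = if 0 < l0z + l2z then 1 else -1)
    (hL : L = σ * Real.sqrt ((l0z ^ 2 + l2z ^ 2) / 2))
    (l₁ s₁ u e₁ : EuclideanSpace ℝ (Fin 3))
    (hl₁ : l₁ = v3 0 0 L)
    (hs₁ : s₁ = v3 0 ((l0z ^ 2 - l2z ^ 2) / (l0z ^ 2 + l2z ^ 2) * L) 0)
    (hu : u = v3 (-1) 0 0) (he₁ : e₁ = v3 1 0 0) :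
    l₁ ≠ 0 ∧
    ⟪l₁, s₁⟫_ℝ = 0 ∧
    ‖s₁‖ < ‖l₁‖ ∧
    ⟪l₁, e₁⟫_ℝ = 0 ∧
    ⟪l₁, u⟫_ℝ = 0 ∧
    l2z * u 2 = 0 ∧
    ‖u‖ = 1 ∧
    l0z ^ 2 = ‖l₁‖ ^ 2 + ⟪cross3 s₁ l₁, e₁⟫_ℝ ∧
    l2z ^ 2 = ‖l₁‖ ^ 2 + ⟪cross3 s₁ l₁, u⟫_ℝ ∧
    ‖s₁ + cross3 l₁ e₁ - v3 0 l0z 0‖ + ‖cross3 (v3 0 0 l2z) u - s₁ - cross3 l₁ u‖ =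
      |σ * Real.sqrt 2 * l0z ^ 2 / Real.sqrt (l0z ^ 2 + l2z ^ 2) - l0z| +
        |σ * Real.sqrt 2 * l2z ^ 2 / Real.sqrt (l0z ^ 2 + l2z ^ 2) - l2z| :=
  hohmann_attained_general l0z l2z h0 h2 σ L hσ hL l₁ s₁ u e₁ hl₁ hs₁ hu he₁
end

section
/- Sign selection in the Hohmann cost: let a, b be nonzero real numbers with a + b > 0 and set c = √2/√(a² + b²). Then |c·a² − a| + |c·b² − b| ≤ |c·a² + a| + |c·b² + b|; i.e., among the two critical Hohmann transfers with intermediate angular momentum l1z = ±√((a² + b²)/2), the one whose sign agrees with the sign of a + b has the smaller fuel cost. -/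
/-- Key case: a negative, b positive, a + b > 0, c ≥ 0. -/
lemma hohmann_key (a b c : ℝ) (ha : a < 0) (hb : 0 < b) (hab : 0 < a + b)
    (hc0 : 0 ≤ c) :
    |c * a ^ 2 - a| + |c * b ^ 2 - b| ≤ |c * a ^ 2 + a| + |c * b ^ 2 + b| := by
  have hxa : 0 ≤ c * a ^ 2 := by positivity
  have hxb : 0 ≤ c * b ^ 2 := by positivity
  have hxy : c * a ^ 2 ≤ c * b ^ 2 := by
    nlinarith [mul_nonneg hc0 (mul_pos (show (0:ℝ) < b - a by linarith) hab).le]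
  have l1 : |c * a ^ 2 - a| = c * a ^ 2 - a := abs_of_nonneg (by linarith)
  have l4 : |c * b ^ 2 + b| = c * b ^ 2 + b := abs_of_nonneg (by linarith)
  have l3 : c * a ^ 2 + a ≤ |c * a ^ 2 + a| := le_abs_self _
  rcases le_or_gt b (c * b ^ 2) with h | h
  · rw [l1, l4, abs_of_nonneg (by linarith : (0:ℝ) ≤ c * b ^ 2 - b)]
    linarith
  · rw [l1, l4, abs_of_nonpos (by linarith : c * b ^ 2 - b ≤ 0)]
    have : -(c * a ^ 2 + a) ≤ |c * a ^ 2 + a| := neg_le_abs _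
    linarith

/-- Sign selection in the Hohmann cost: for nonzero a, b with a + b > 0 and
c = √2/√(a² + b²), one has |c·a² − a| + |c·b² − b| ≤ |c·a² + a| + |c·b² + b|. -/
theorem hohmann_sign_selection
    (a b : ℝ) (ha : a ≠ 0) (hb : b ≠ 0) (hab : 0 < a + b)
    (c : ℝ) (hc : c = Real.sqrt 2 / Real.sqrt (a ^ 2 + b ^ 2)) :
    |c * a ^ 2 - a| + |c * b ^ 2 - b| ≤ |c * a ^ 2 + a| + |c * b ^ 2 + b| := by
  have hc0 : 0 ≤ c := by
    rw [hc]; exact div_nonneg (Real.sqrt_nonneg _) (Real.sqrt_nonneg _)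
  have hxa : 0 ≤ c * a ^ 2 := by positivity
  have hxb : 0 ≤ c * b ^ 2 := by positivity
  rcases lt_or_gt_of_ne ha with ha' | ha'
  · have hb' : 0 < b := by linarith
    exact hohmann_key a b c ha' hb' hab hc0
  · rcases lt_or_gt_of_ne hb with hb' | hb'
    · have := hohmann_key b a c hb' ha' (by linarith) hc0
      linarith
    · have l1 : |c * a ^ 2 - a| ≤ c * a ^ 2 + a := by
        rw [abs_le]; constructor <;> linarith
      have l2 : |c * b ^ 2 - b| ≤ c * b ^ 2 + b := by
        rw [abs_le]; constructor <;> linarith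
      have l3 : |c * a ^ 2 + a| = c * a ^ 2 + a := abs_of_nonneg (by linarith)
      have l4 : |c * b ^ 2 + b| = c * b ^ 2 + b := abs_of_nonneg (by linarith)
      rw [l3, l4]; linarith
end

section
/- Conservation laws at antipodal points: let k₀, k₁ > 0, r₀ = (1/k₀, 0, 0), r₁ = (−1/k₁, 0, 0), and let v = (vₓ, vᵧ, v𝓏), w = (wₓ, wᵧ, w𝓏) ∈ ℝ³ with (vᵧ, v𝓏) ≠ (0, 0). If r₀ × v = r₁ × w and v × (r₀ × v) − (1,0,0) = w × (r₁ × w) − (−1,0,0), then wₓ = vₓ, wᵧ = −(k₁/k₀)·vᵧ and w𝓏 = −(k₁/k₀)·v𝓏. -/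
open scoped InnerProductSpace

/-!
Both base points lie on the `x`-axis, so only the transverse components (indices 1 and 2)
of the two conservation laws carry information. Angular momentum gives
`vᵢ / k₀ = -wᵢ / k₁`, which is the claimed scaling of `wᵢ`. The transverse part of
`u × (r × u)` for `r = c e₀` is `-c u₀ uᵢ`, so the eccentricity law gives
`v₀ vᵢ / k₀ = -w₀ wᵢ / k₁ = w₀ vᵢ / k₀`; choosing `i` with `vᵢ ≠ 0` yields `w₀ = v₀`.
-/

lemma v3_axis_apply_of_ne_zero (x : ℝ) {i : Fin 3} (hi : i ≠ 0) : v3 x 0 0 i = 0 := by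
  fin_cases i <;> simp_all [v3]

lemma mul_apply_eq_of_cross3_v3_axis_eq {c₀ c₁ : ℝ} {v w : EuclideanSpace ℝ (Fin 3)}
    (h : cross3 (v3 c₀ 0 0) v = cross3 (v3 c₁ 0 0) w) {i : Fin 3} (hi : i ≠ 0) :
    c₀ * v i = c₁ * w i := by
  have h₁ := congrArg (· 1) h
  have h₂ := congrArg (· 2) h
  simp only [cross3, v3] at h₁ h₂
  fin_cases i <;> simp_all

lemma cross3_cross3_v3_axis_apply (c : ℝ) (v : EuclideanSpace ℝ (Fin 3)) {i : Fin 3}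
    (hi : i ≠ 0) : cross3 v (cross3 (v3 c 0 0) v) i = -(c * v 0 * v i) := by
  fin_cases i <;> simp_all [cross3, v3] <;> ring

lemma mul_apply_mul_apply_eq_of_eccentricity_eq {c₀ c₁ x₀ x₁ : ℝ}
    {v w : EuclideanSpace ℝ (Fin 3)}
    (h : cross3 v (cross3 (v3 c₀ 0 0) v) - v3 x₀ 0 0 =
      cross3 w (cross3 (v3 c₁ 0 0) w) - v3 x₁ 0 0) {i : Fin 3} (hi : i ≠ 0) :
    c₀ * v 0 * v i = c₁ * w 0 * w i := by
  have hi' := congrArg (· i) h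
  simp only [PiLp.sub_apply, cross3_cross3_v3_axis_apply _ _ hi,
    v3_axis_apply_of_ne_zero _ hi] at hi'
  linarith

/-- Conservation laws at antipodal points: if the angular momentum and (rescaled)
eccentricity vector agree at r₀ = (1/k₀,0,0) with velocity v and at r₁ = (−1/k₁,0,0)
with velocity w, and (vᵧ, v𝓏) ≠ (0,0), then wₓ = vₓ, wᵧ = −(k₁/k₀)vᵧ, w𝓏 = −(k₁/k₀)v𝓏. -/
theorem conservation_at_antipodal_points
    (k₀ k₁ : ℝ) (hk₀ : 0 < k₀) (hk₁ : 0 < k₁)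
    (v w : EuclideanSpace ℝ (Fin 3))
    (hne : (v 1, v 2) ≠ (0, 0))
    (hmom : cross3 (v3 (1 / k₀) 0 0) v = cross3 (v3 (-(1 / k₁)) 0 0) w)
    (hecc : cross3 v (cross3 (v3 (1 / k₀) 0 0) v) - v3 1 0 0 =
            cross3 w (cross3 (v3 (-(1 / k₁)) 0 0) w) - v3 (-1) 0 0) :
    w 0 = v 0 ∧ w 1 = -(k₁ / k₀) * v 1 ∧ w 2 = -(k₁ / k₀) * v 2 := by
  have htrans {i : Fin 3} (hi : i ≠ 0) : w i = -(k₁ / k₀) * v i := by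
    have := mul_apply_eq_of_cross3_v3_axis_eq hmom hi
    field_simp at this ⊢
    linarith
  obtain ⟨i, hi, hvi⟩ : ∃ i : Fin 3, i ≠ 0 ∧ v i ≠ 0 := by
    by_contra! h
    exact hne (Prod.ext (h 1 (by decide)) (h 2 (by decide)))
  have hecc_i := mul_apply_mul_apply_eq_of_eccentricity_eq hecc hi
  refine ⟨?_, htrans (by decide), htrans (by decide)⟩
  have hscaled : v i / k₀ * w 0 = v i / k₀ * v 0 := by
    rw [htrans hi] at hecc_i
    field_simp at hecc_i ⊢
    linear_combination -hecc_i
  exact mul_left_cancel₀ (div_ne_zero hvi hk₀.ne') hscaled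
end

section
/- Symmetric tangential transfer between two rotated ellipses: let s₀ₓ, s₀ᵧ ∈ ℝ with s₀ₓ < 1, and set x₀ = x₁ = 0, y₀ = 1, y₁ = −1, s₁ₓ = 0, s₁ᵧ = s₀ᵧ, l₁𝓏 = √(1 − s₀ₓ). Then these values satisfy the four constraint equations x₀² + y₀² = 1, x₁² + y₁² = 1, l₁𝓏² + l₁𝓏·(x₀·s₁ᵧ − y₀·s₁ₓ) − 1 − x₀·s₀ᵧ + y₀·s₀ₓ = 0 and l₁𝓏² + l₁𝓏·(x₁·s₁ᵧ − y₁·s₁ₓ) − 1 − x₁·s₀ᵧ − y₁·s₀ₓ = 0; moreover the two squared impulse magnitudes Δ₀² = (s₀ₓ − s₁ₓ)² + (s₀ᵧ − s₁ᵧ)² + (1 − l₁𝓏)² + 2(1 − l₁𝓏)(x₀(s₀ᵧ − s₁ᵧ) − y₀(s₀ₓ − s₁ₓ)) and Δ₁² = (s₀ₓ + s₁ₓ)² + (s₀ᵧ − s₁ᵧ)² + (1 − l₁𝓏)² + 2(1 − l₁𝓏)(x₁(s₀ᵧ − s₁ᵧ) + y₁(s₀ₓ + s₁ₓ)) both equal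 (1 − s₀ₓ − √(1 − s₀ₓ))², so the fuel cost is f₁ = Δ₀ + Δ₁ = 2·|1 − s₀ₓ − √(1 − s₀ₓ)|. -/
/-- Symmetric tangential transfer between two rotated ellipses: the stated values satisfy
the four constraint equations, both squared impulse magnitudes equal
(1 − s₀ₓ − √(1 − s₀ₓ))², and the fuel cost is 2·|1 − s₀ₓ − √(1 − s₀ₓ)|. -/
theorem symmetric_tangential_transfer
    (s₀x s₀y : ℝ) (hs : s₀x < 1)
    (x₀ x₁ y₀ y₁ s₁x s₁y l₁z : ℝ)
    (hx₀ : x₀ = 0) (hx₁ : x₁ = 0) (hy₀ : y₀ = 1) (hy₁ : y₁ = -1)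
    (hs₁x : s₁x = 0) (hs₁y : s₁y = s₀y) (hl : l₁z = Real.sqrt (1 - s₀x)) :
    x₀ ^ 2 + y₀ ^ 2 = 1 ∧
    x₁ ^ 2 + y₁ ^ 2 = 1 ∧
    l₁z ^ 2 + l₁z * (x₀ * s₁y - y₀ * s₁x) - 1 - x₀ * s₀y + y₀ * s₀x = 0 ∧
    l₁z ^ 2 + l₁z * (x₁ * s₁y - y₁ * s₁x) - 1 - x₁ * s₀y - y₁ * s₀x = 0 ∧
    (s₀x - s₁x) ^ 2 + (s₀y - s₁y) ^ 2 + (1 - l₁z) ^ 2 +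
        2 * (1 - l₁z) * (x₀ * (s₀y - s₁y) - y₀ * (s₀x - s₁x)) =
      (1 - s₀x - Real.sqrt (1 - s₀x)) ^ 2 ∧
    (s₀x + s₁x) ^ 2 + (s₀y - s₁y) ^ 2 + (1 - l₁z) ^ 2 +
        2 * (1 - l₁z) * (x₁ * (s₀y - s₁y) + y₁ * (s₀x + s₁x)) =
      (1 - s₀x - Real.sqrt (1 - s₀x)) ^ 2 ∧
    (∀ Δ₀ Δ₁ : ℝ, 0 ≤ Δ₀ → 0 ≤ Δ₁ →
      Δ₀ ^ 2 = (s₀x - s₁x) ^ 2 + (s₀y - s₁y) ^ 2 + (1 - l₁z) ^ 2 +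
        2 * (1 - l₁z) * (x₀ * (s₀y - s₁y) - y₀ * (s₀x - s₁x)) →
      Δ₁ ^ 2 = (s₀x + s₁x) ^ 2 + (s₀y - s₁y) ^ 2 + (1 - l₁z) ^ 2 +
        2 * (1 - l₁z) * (x₁ * (s₀y - s₁y) + y₁ * (s₀x + s₁x)) →
      Δ₀ + Δ₁ = 2 * |1 - s₀x - Real.sqrt (1 - s₀x)|) := by
  subst hx₀ hx₁ hy₀ hy₁ hs₁x hs₁y hl
  have ht2 : Real.sqrt (1 - s₀x) ^ 2 = 1 - s₀x := Real.sq_sqrt (by linarith)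
  set t := Real.sqrt (1 - s₀x) with hts
  have key : ∀ Δ : ℝ, 0 ≤ Δ → Δ ^ 2 = (1 - s₀x - t) ^ 2 → Δ = |1 - s₀x - t| := by
    intro Δ hΔ h
    have : Δ ^ 2 = |1 - s₀x - t| ^ 2 := by rw [sq_abs]; exact h
    nlinarith [abs_nonneg (1 - s₀x - t), sq_abs (1 - s₀x - t)]
  refine ⟨by ring, by ring, by nlinarith, by nlinarith, by nlinarith, by nlinarith,
    fun Δ₀ Δ₁ h₀ h₁ e₀ e₁ => ?_⟩
  have E₀ : Δ₀ = |1 - s₀x - t| := key Δ₀ h₀ (by rw [e₀]; nlinarith)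
  have E₁ : Δ₁ = |1 - s₀x - t| := key Δ₁ h₁ (by rw [e₁]; nlinarith)
  rw [E₀, E₁]; ring
end

section
/- The symmetric tangential transfer beats the apsidal transfer: for every real t with 0 < t < 1, one has 2·(√(1 − t) − (1 − t)) < t; equivalently, for 0 < |s₀ₓ| < 1, the cost 2·|1 − |s₀ₓ| − √(1 − |s₀ₓ|)| of the symmetric tangential two-impulse transfer between the two rotated ellipses is strictly smaller than the cost 2·|s₀ₓ| of the transfer applying both impulses at the points (±1, 0, 0). -/
/-- The symmetric tangential transfer beats the apsidal transfer: for 0 < t < 1 one has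
2·(√(1 − t) − (1 − t)) < t; equivalently, for 0 < |s₀ₓ| < 1, the tangential cost
2·|1 − |s₀ₓ| − √(1 − |s₀ₓ|)| is strictly smaller than the apsidal cost 2·|s₀ₓ|. -/
theorem tangential_beats_apsidal :
    (∀ t : ℝ, 0 < t → t < 1 → 2 * (Real.sqrt (1 - t) - (1 - t)) < t) ∧
    (∀ s₀x : ℝ, 0 < |s₀x| → |s₀x| < 1 →
      2 * |1 - |s₀x| - Real.sqrt (1 - |s₀x|)| < 2 * |s₀x|) := by
  have key : ∀ t : ℝ, 0 < t → t < 1 → 2 * (Real.sqrt (1 - t) - (1 - t)) < t := by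
    intro t ht ht1
    have h0 : (0:ℝ) ≤ 1 - t := by linarith
    have hs : Real.sqrt (1 - t) ^ 2 = 1 - t := Real.sq_sqrt h0
    have hlt : Real.sqrt (1 - t) < 1 := by
      nlinarith [Real.sq_sqrt h0, Real.sqrt_nonneg (1-t)]
    have hpos : 0 ≤ Real.sqrt (1 - t) := Real.sqrt_nonneg _
    nlinarith [sq_nonneg (1 - Real.sqrt (1 - t))]
  refine ⟨key, fun s₀x h0 h1 => ?_⟩
  have hge : 1 - |s₀x| ≤ Real.sqrt (1 - |s₀x|) := by
    nlinarith [Real.sq_sqrt (by linarith : (0:ℝ) ≤ 1 - |s₀x|),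
      Real.sqrt_nonneg (1 - |s₀x|)]
  have := key |s₀x| h0 h1
  rw [abs_of_nonpos (by linarith)]
  linarith
end
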